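/- Let ν be a string-monotonic function and G a finite prefix-free set of finite binary strings. Then S_G is the union over N ∈ ℕ of the sets of sequences extending some element of G^N_ν, these sets are increasing in N, and μ(S_G) = sup_N |G^N_ν|·2^{-N}; in particular |G^N_ν|·2^{-N} converges to μ(S_G) as N → ∞. -/

import Mathlib

/-!
The set of sequences extending some `y ∈ G^N_ν` is exactly the set of `α` with
`x ⊑ ν(α_{≤N})` for some `x ∈ G`, and by monotonicity of `ν` this condition only gets weaker
as `N` grows. Hence `S_G` is an increasing union, and its measure is the supremum (and limit)
of the measures of the pieces; the `N`-th piece is a disjoint union of `|G^N_ν|` cylinders of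
measure `2^{-N}`.
-/

open scoped Classical

/-- The first `n` bits of an infinite binary sequence, as a finite string. -/
def firstN (α : ℕ → Bool) (n : ℕ) : List Bool := List.ofFn fun i : Fin n => α i

/-- The set of infinite binary sequences extending the finite string `x`. -/
def cylSet (x : List Bool) : Set (ℕ → Bool) := {α | ∀ i : Fin x.length, α i = x.get i}

/-- A set of finite binary strings is prefix-free if no element is a proper prefix
of another element. -/
def PrefixFree (A : Set (List Bool)) : Prop :=
  ∀ x ∈ A, ∀ y ∈ A, x <+: y → x = y

/-- A function on finite binary strings is string-monotonic if it is total computable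
and monotone with respect to the prefix relation. -/
def StringMonotonic (ν : List Bool → List Bool) : Prop :=
  Computable ν ∧ ∀ x y : List Bool, ν x <+: ν (x ++ y)

/-- `S_G`: sequences α such that some prefix of α is mapped by ν to a string
with a prefix in `G`. -/
def SG (ν : List Bool → List Bool) (G : Finset (List Bool)) : Set (ℕ → Bool) :=
  {α | ∃ n : ℕ, ∃ x ∈ G, x <+: ν (firstN α n)}

/-- `G^N_ν`: strings of length `N` whose ν-image has a prefix in `G`. -/
noncomputable def GN (ν : List Bool → List Bool) (G : Finset (List Bool)) (N : ℕ) :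
    Finset (List Bool) :=
  ((Finset.univ : Finset (Fin N → Bool)).image fun f => List.ofFn f).filter
    fun y => ∃ x ∈ G, x <+: ν y

open MeasureTheory

lemma length_firstN (α : ℕ → Bool) (n : ℕ) : (firstN α n).length = n := List.length_ofFn

lemma firstN_add (α : ℕ → Bool) (n k : ℕ) :
    firstN α (n + k) = firstN α n ++ List.ofFn fun i : Fin k => α (n + i) :=
  List.ofFn_add

lemma firstN_prefix_firstN (α : ℕ → Bool) {n m : ℕ} (h : n ≤ m) : firstN α n <+: firstN α m := by
  obtain ⟨k, rfl⟩ := Nat.exists_eq_add_of_le h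
  exact ⟨_, (firstN_add α n k).symm⟩

lemma mem_cylSet_iff_firstN_eq {α : ℕ → Bool} {y : List Bool} :
    α ∈ cylSet y ↔ firstN α y.length = y := by
  refine ⟨fun h => List.ext_getElem (length_firstN α _) fun i _ hi => ?_, fun h i => ?_⟩
  · simpa [firstN] using h ⟨i, hi⟩
  · simpa [firstN] using List.getElem_of_eq h (by simp [firstN])

lemma disjoint_cylSet {y z : List Bool} (hlen : y.length = z.length) (hne : y ≠ z) :
    Disjoint (cylSet y) (cylSet z) := by
  refine Set.disjoint_left.2 fun α hy hz => hne ?_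
  rw [mem_cylSet_iff_firstN_eq] at hy hz
  rw [← hy, ← hz, hlen]

lemma measurableSet_cylSet (y : List Bool) : MeasurableSet (cylSet y) := by
  have : cylSet y = ⋂ i : Fin y.length, (fun α : ℕ → Bool => α i) ⁻¹' {y.get i} := by
    ext α; simp [cylSet]
  rw [this]
  exact .iInter fun i => measurable_pi_apply _ (.singleton _)

lemma measure_biUnion_cylSet {μ : Measure (ℕ → Bool)}
    (hμ : ∀ x : List Bool, μ (cylSet x) = (2 : ENNReal) ^ (-(x.length : ℤ)))
    {s : Finset (List Bool)} {N : ℕ} (hs : ∀ y ∈ s, y.length = N) :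
    μ (⋃ y ∈ s, cylSet y) = (s.card : ENNReal) * (2 : ENNReal) ^ (-(N : ℤ)) := by
  have hdisj : (s : Set (List Bool)).PairwiseDisjoint cylSet := fun y hy z hz hne =>
    disjoint_cylSet ((hs y hy).trans (hs z hz).symm) hne
  rw [measure_biUnion_finset hdisj fun y _ => measurableSet_cylSet y,
    Finset.sum_congr rfl fun y hy => by rw [hμ y, hs y hy], Finset.sum_const, nsmul_eq_mul]

lemma mem_GN_iff {ν : List Bool → List Bool} {G : Finset (List Bool)} {N : ℕ} {y : List Bool} :
    y ∈ GN ν G N ↔ y.length = N ∧ ∃ x ∈ G, x <+: ν y := by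
  simp only [GN, Finset.mem_filter, Finset.mem_image, Finset.mem_univ, true_and]
  refine and_congr_left fun _ => ⟨?_, ?_⟩
  · rintro ⟨f, rfl⟩
    exact List.length_ofFn
  · rintro rfl
    exact ⟨y.get, List.ofFn_get y⟩

lemma mem_biUnion_GN_cylSet_iff {ν : List Bool → List Bool} {G : Finset (List Bool)} {N : ℕ}
    {α : ℕ → Bool} : α ∈ ⋃ y ∈ GN ν G N, cylSet y ↔ ∃ x ∈ G, x <+: ν (firstN α N) := by
  simp only [Set.mem_iUnion, mem_GN_iff, exists_prop]
  constructor
  · rintro ⟨y, ⟨rfl, hG⟩, hy⟩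
    rwa [mem_cylSet_iff_firstN_eq.1 hy]
  · intro h
    exact ⟨firstN α N, ⟨length_firstN α N, h⟩, by rw [mem_cylSet_iff_firstN_eq, length_firstN]⟩

lemma SG_eq_iUnion_biUnion_GN_cylSet (ν : List Bool → List Bool) (G : Finset (List Bool)) :
    SG ν G = ⋃ N : ℕ, ⋃ y ∈ GN ν G N, cylSet y := by
  ext α
  simp only [Set.mem_iUnion (s := fun N : ℕ => ⋃ y ∈ GN ν G N, cylSet y),
    mem_biUnion_GN_cylSet_iff]
  rfl

lemma monotone_biUnion_GN_cylSet {ν : List Bool → List Bool}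
    (hν : ∀ x y : List Bool, ν x <+: ν (x ++ y)) (G : Finset (List Bool)) :
    Monotone fun N : ℕ => ⋃ y ∈ GN ν G N, cylSet y := by
  intro n m hnm α
  simp only [mem_biUnion_GN_cylSet_iff]
  rintro ⟨x, hx, hpre⟩
  obtain ⟨t, ht⟩ := firstN_prefix_firstN α hnm
  exact ⟨x, hx, ht ▸ hpre.trans (hν _ t)⟩

theorem stmt_5_general
    (μ : MeasureTheory.Measure (ℕ → Bool))
    (hμ : ∀ x : List Bool, μ (cylSet x) = (2 : ENNReal) ^ (-(x.length : ℤ)))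
    (ν : List Bool → List Bool) (hν : StringMonotonic ν)
    (G : Finset (List Bool)) :
    (SG ν G = ⋃ N : ℕ, ⋃ y ∈ GN ν G N, cylSet y) ∧
    (Monotone fun N : ℕ => ⋃ y ∈ GN ν G N, cylSet y) ∧
    (μ (SG ν G) = ⨆ N : ℕ, ((GN ν G N).card : ENNReal) * (2 : ENNReal) ^ (-(N : ℤ))) ∧
    Filter.Tendsto
      (fun N : ℕ => ((GN ν G N).card : ENNReal) * (2 : ENNReal) ^ (-(N : ℤ)))
      Filter.atTop (nhds (μ (SG ν G))) := by
  have hmono := monotone_biUnion_GN_cylSet hν.2 G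
  have hmeas (N : ℕ) : μ (⋃ y ∈ GN ν G N, cylSet y) =
      ((GN ν G N).card : ENNReal) * (2 : ENNReal) ^ (-(N : ℤ)) :=
    measure_biUnion_cylSet hμ fun _ hy => (mem_GN_iff.1 hy).1
  have hsup : μ (SG ν G) = ⨆ N : ℕ, ((GN ν G N).card : ENNReal) * (2 : ENNReal) ^ (-(N : ℤ)) := by
    simp only [SG_eq_iUnion_biUnion_GN_cylSet, hmono.measure_iUnion, hmeas]
  refine ⟨SG_eq_iUnion_biUnion_GN_cylSet ν G, hmono, hsup, ?_⟩
  rw [hsup]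
  refine tendsto_atTop_iSup fun n m h => ?_
  simp only [← hmeas]
  exact measure_mono (hmono h)

theorem stmt_5
    (μ : MeasureTheory.Measure (ℕ → Bool)) [MeasureTheory.IsProbabilityMeasure μ]
    (hμ : ∀ x : List Bool, μ (cylSet x) = (2 : ENNReal) ^ (-(x.length : ℤ)))
    (ν : List Bool → List Bool) (hν : StringMonotonic ν)
    (G : Finset (List Bool)) (hG : PrefixFree (↑G : Set (List Bool))) :
    (SG ν G = ⋃ N : ℕ, ⋃ y ∈ GN ν G N, cylSet y) ∧
    (Monotone fun N : ℕ => ⋃ y ∈ GN ν G N, cylSet y) ∧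
    (μ (SG ν G) = ⨆ N : ℕ, ((GN ν G N).card : ENNReal) * (2 : ENNReal) ^ (-(N : ℤ))) ∧
    Filter.Tendsto
      (fun N : ℕ => ((GN ν G N).card : ENNReal) * (2 : ENNReal) ^ (-(N : ℤ)))
      Filter.atTop (nhds (μ (SG ν G))) :=
  stmt_5_general μ hμ ν hν G
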